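/- arXiv:2408.14773 — 3 statements merged into one kernel-verified Lean document; each statement's English description precedes it below -/
import Mathlib

section
/- Let f(z) = z + ∑_{n=2}^∞ aₙ zⁿ be analytic on the unit disk 𝔻 with |aₙ| ≤ n for all n ≥ 2, and suppose |f(z)| ≥ 1/4 for all z in a punctured neighborhood of the boundary, so that d(0, ∂f(𝔻)) ≥ 1/4. Let Φ : [0,1] → [0,∞) be continuous and increasing, and let ω : 𝔻 → 𝔻 be analytic with |ω(z)| ≤ |z|. Then |ω(z)| + ∑_{n=2}^∞ |aₙ| |ω(z)|ⁿ + Φ(|ω(z)|) ∑_{n=2}^∞ |aₙ|² |ω(z)|^{2n} ≤ 1/4 ≤ d(0, ∂f(𝔻)) whenever |z| = r ≤ R, where R ∈ (0,1) is the unique root of F(r) := r/(1−r)² + Φ(r)·r⁴(r⁴ − 3r² + 4)/(1 − 3r² + 3r⁴ − r⁶) − 1/4 = 0. -/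
/-!
The left-hand side increases with `|ω(z)| ≤ |z| ≤ R`, and `|aₙ| ≤ n` dominates both series
termwise by those of the Koebe-type coefficients `aₙ = n` at radius `R`:
`∑_{n ≥ 2} n Rⁿ = R/(1-R)² - R` and `∑_{n ≥ 2} n² R²ⁿ = R⁴(R⁴ - 3R² + 4)/(1-R²)³`.
Together with `Φ(|ω(z)|) ≤ Φ(R)` this bounds the left-hand side by `F(R) + 1/4 = 1/4`.
-/

open Set Metric

section Geometric

variable {𝕜 : Type*} [NormedField 𝕜] {r : 𝕜}

theorem hasSum_coe_add_two_mul_geometric (hr : ‖r‖ < 1) :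
    HasSum (fun n : ℕ ↦ ((n : 𝕜) + 2) * r ^ (n + 2)) (r / (1 - r) ^ 2 - r) := by
  have h := (hasSum_nat_add_iff' (f := fun n : ℕ ↦ (n : 𝕜) * r ^ n) 2).2
    (hasSum_coe_mul_geometric_of_norm_lt_one hr)
  simpa [Finset.sum_range_succ] using h

theorem coe_add_two_sq_eq_choose (n : ℕ) :
    ((n : 𝕜) + 2) ^ 2 = 2 * ((n + 2).choose 2 : 𝕜) + ((n + 1).choose 1 : 𝕜) + 1 := by
  have h : (((n + 2) * (n + 1) : ℕ) : 𝕜) = (((n + 2).choose 2 * 2 : ℕ) : 𝕜) := by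
    congr 1
    simpa using Nat.add_one_mul_choose_eq (n + 1) 1
  push_cast [Nat.choose_one_right] at h ⊢
  linear_combination h

theorem hasSum_coe_add_two_sq_mul_geometric (hr : ‖r‖ < 1) :
    HasSum (fun n : ℕ ↦ ((n : 𝕜) + 2) ^ 2 * r ^ (n + 2))
      (r ^ 2 * (r ^ 2 - 3 * r + 4) / (1 - r) ^ 3) := by
  have h1r : 1 - r ≠ 0 := sub_ne_zero.2 fun h ↦ by simp [← h] at hr
  have h := (((hasSum_choose_mul_geometric_of_norm_lt_one 2 hr).mul_left 2).add
    (hasSum_choose_mul_geometric_of_norm_lt_one 1 hr)).add (hasSum_geometric_of_norm_lt_one hr)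
  have hterm : (fun n : ℕ ↦ ((n : 𝕜) + 2) ^ 2 * r ^ (n + 2)) = fun n ↦ r ^ 2 *
      (2 * (((n + 2).choose 2 : 𝕜) * r ^ n) + ((n + 1).choose 1 : 𝕜) * r ^ n + r ^ n) := by
    funext n
    rw [coe_add_two_sq_eq_choose, pow_add]
    ring
  have hval : r ^ 2 * (r ^ 2 - 3 * r + 4) / (1 - r) ^ 3 =
      r ^ 2 * (2 * (1 / (1 - r) ^ (2 + 1)) + 1 / (1 - r) ^ (1 + 1) + (1 - r)⁻¹) := by
    field_simp
    ring
  rw [hterm, hval]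
  exact h.mul_left _

end Geometric

theorem tsum_le_of_nonneg_of_le_of_hasSum {ι : Type*} {f g : ι → ℝ} {s : ℝ}
    (hf : ∀ i, 0 ≤ f i) (hfg : ∀ i, f i ≤ g i) (hg : HasSum g s) : ∑' i, f i ≤ s :=
  hasSum_le hfg (hg.summable.of_nonneg_of_le hf hfg).hasSum hg

theorem stmt4_general (f : ℂ → ℂ) (a : ℕ → ℂ)
    (ha : ∀ n, 2 ≤ n → ‖a n‖ ≤ (n : ℝ))
    (hd : 1 / 4 ≤ infDist 0 (frontier (f '' ball 0 1)))
    (Φ : ℝ → ℝ)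
    (hΦm : MonotoneOn Φ (Icc 0 1)) (hΦ0 : ∀ x ∈ Icc (0:ℝ) 1, 0 ≤ Φ x)
    (ω : ℂ → ℂ)
    (hω : ∀ z ∈ ball (0:ℂ) 1, ‖ω z‖ ≤ ‖z‖)
    (R : ℝ) (hR : R ∈ Ioo (0:ℝ) 1)
    (hroot : R / (1 - R) ^ 2
        + Φ R * (R ^ 4 * (R ^ 4 - 3 * R ^ 2 + 4) / (1 - 3 * R ^ 2 + 3 * R ^ 4 - R ^ 6))
        - 1 / 4 = 0) :
    ∀ z : ℂ, ‖z‖ ≤ R →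
      ‖ω z‖ + (∑' n : ℕ, ‖a (n + 2)‖ * ‖ω z‖ ^ (n + 2))
        + Φ ‖ω z‖ * (∑' n : ℕ, ‖a (n + 2)‖ ^ 2 * ‖ω z‖ ^ (2 * (n + 2)))
      ≤ 1 / 4 ∧ (1 : ℝ) / 4 ≤ infDist 0 (frontier (f '' ball 0 1)) := by
  intro z hz
  refine ⟨?_, hd⟩
  obtain ⟨hR0, hR1⟩ := hR
  set r := ‖ω z‖
  have hr0 : 0 ≤ r := norm_nonneg _
  have hrR : r ≤ R := (hω z (mem_ball_zero_iff.2 (hz.trans_lt hR1))).trans hz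
  have hcoeff (n : ℕ) : ‖a (n + 2)‖ ≤ (n : ℝ) + 2 := by exact_mod_cast ha (n + 2) le_add_self
  have hlin : ∑' n : ℕ, ‖a (n + 2)‖ * r ^ (n + 2) ≤ R / (1 - R) ^ 2 - R :=
    tsum_le_of_nonneg_of_le_of_hasSum (fun n ↦ by positivity)
      (fun n ↦ by gcongr; exact hcoeff n)
      (hasSum_coe_add_two_mul_geometric (by rwa [Real.norm_of_nonneg hR0.le]))
  have hsq : ∑' n : ℕ, ‖a (n + 2)‖ ^ 2 * r ^ (2 * (n + 2)) ≤
      R ^ 4 * (R ^ 4 - 3 * R ^ 2 + 4) / (1 - 3 * R ^ 2 + 3 * R ^ 4 - R ^ 6) := by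
    have hterm (n : ℕ) :
        ‖a (n + 2)‖ ^ 2 * r ^ (2 * (n + 2)) ≤ ((n : ℝ) + 2) ^ 2 * (R ^ 2) ^ (n + 2) := by
      rw [pow_mul]
      gcongr
      exact hcoeff n
    refine (tsum_le_of_nonneg_of_le_of_hasSum (fun n ↦ by positivity) hterm
      (hasSum_coe_add_two_sq_mul_geometric ?_)).trans_eq (by ring)
    rw [Real.norm_of_nonneg (by positivity)]
    nlinarith
  have hΦ := mul_le_mul (hΦm ⟨hr0, hrR.trans hR1.le⟩ ⟨hR0.le, hR1.le⟩ hrR) hsq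
    (tsum_nonneg fun n ↦ by positivity) (hΦ0 R ⟨hR0.le, hR1.le⟩)
  linarith

theorem stmt4 (f : ℂ → ℂ) (a : ℕ → ℂ)
    (hf : AnalyticOn ℂ f (ball 0 1))
    (hrep : ∀ z ∈ ball (0:ℂ) 1, f z = z + ∑' n : ℕ, a (n + 2) * z ^ (n + 2))
    (ha : ∀ n, 2 ≤ n → ‖a n‖ ≤ (n : ℝ))
    (hd : 1 / 4 ≤ infDist 0 (frontier (f '' ball 0 1)))
    (Φ : ℝ → ℝ) (hΦc : ContinuousOn Φ (Icc 0 1))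
    (hΦm : MonotoneOn Φ (Icc 0 1)) (hΦ0 : ∀ x ∈ Icc (0:ℝ) 1, 0 ≤ Φ x)
    (ω : ℂ → ℂ) (hωmap : ∀ z ∈ ball (0:ℂ) 1, ω z ∈ ball (0:ℂ) 1)
    (hω : ∀ z ∈ ball (0:ℂ) 1, ‖ω z‖ ≤ ‖z‖)
    (R : ℝ) (hR : R ∈ Ioo (0:ℝ) 1)
    (hroot : R / (1 - R) ^ 2
        + Φ R * (R ^ 4 * (R ^ 4 - 3 * R ^ 2 + 4) / (1 - 3 * R ^ 2 + 3 * R ^ 4 - R ^ 6))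
        - 1 / 4 = 0)
    (huniq : ∀ r ∈ Ioo (0:ℝ) 1,
      r / (1 - r) ^ 2
        + Φ r * (r ^ 4 * (r ^ 4 - 3 * r ^ 2 + 4) / (1 - 3 * r ^ 2 + 3 * r ^ 4 - r ^ 6))
        - 1 / 4 = 0 → r = R) :
    ∀ z : ℂ, ‖z‖ ≤ R →
      ‖ω z‖ + (∑' n : ℕ, ‖a (n + 2)‖ * ‖ω z‖ ^ (n + 2))
        + Φ ‖ω z‖ * (∑' n : ℕ, ‖a (n + 2)‖ ^ 2 * ‖ω z‖ ^ (2 * (n + 2)))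
      ≤ 1 / 4 ∧ (1 : ℝ) / 4 ≤ infDist 0 (frontier (f '' ball 0 1)) :=
  stmt4_general f a ha hd Φ hΦm hΦ0 ω hω R hR hroot
end

section
/- Let −1 ≤ B < A ≤ 1 with B ≠ 0, and suppose f(z) = z + ∑_{n=2}^∞ aₙ zⁿ satisfies the Janowski coefficient bounds |aₙ| ≤ ∏_{k=0}^{n−2} |(B−A)+Bk|/(k+1) for n ≥ 2, with d(0, ∂f(𝔻)) ≥ (1−B)^{(A−B)/B}. Let Φ : [0,1] → [0,∞) be continuous increasing and ω : 𝔻 → 𝔻 with |ω(z)| ≤ |z|. Then |ω(z)| + ∑_{n=2}^∞ |aₙ||ω(z)|ⁿ + Φ(|ω(z)|) ∑_{n=2}^∞ |aₙ|²|ω(z)|^{2n} ≤ d(0, ∂f(𝔻)) for all |z| = r ≤ R, where R is a root in (0,1) of r + ∑_{n=2}^∞ (∏_{k=0}^{n−2}|(B−A)+Bk|/(k+1)) rⁿ + Φ(r) ∑_{n=2}^∞ (∏_{k=0}^{n−2}|(B−A)+Bk|/(k+1))² r^{2n} = (1−B)^{(A−B)/B}. -/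
/-!
Since `|ω z| ≤ |z| ≤ R`, the Janowski bounds make every term of the left-hand side at most the
corresponding term of the same expression at `r = R` with `|aₙ|` replaced by its majorant; that
expression equals `(1 - B) ^ ((A - B) / B)` by the choice of `R`, which is at most the distance
to the boundary. The majorant grows at most linearly in `n`, so the comparison series converge
for `R < 1`.
-/

open Set Metric
open scoped BigOperators

/-- Janowski's bound for `|aₙ₊₂|`. -/
noncomputable def janowskiCoeff (A B : ℝ) (n : ℕ) : ℝ :=
  ∏ k ∈ Finset.range (n + 1), |(B - A) + B * k| / (k + 1)

/-- `r + ∑_{n ≥ 2} bₙ rⁿ + Φ(r) ∑_{n ≥ 2} bₙ² r²ⁿ`, with `b n` standing for `bₙ₊₂`. -/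
noncomputable def bohrSum (Φ : ℝ → ℝ) (b : ℕ → ℝ) (r : ℝ) : ℝ :=
  r + (∑' n : ℕ, b n * r ^ (n + 2)) + Φ r * ∑' n : ℕ, b n ^ 2 * r ^ (2 * (n + 2))

lemma janowskiCoeff_nonneg (A B : ℝ) (n : ℕ) : 0 ≤ janowskiCoeff A B n :=
  Finset.prod_nonneg fun _ _ => by positivity

lemma abs_sub_add_mul_le {A B : ℝ} (hB : |B| ≤ 1) (hAB : |B - A| ≤ 2) (k : ℕ) :
    |(B - A) + B * k| ≤ k + 2 :=
  calc |(B - A) + B * k| ≤ |B - A| + |B| * k := by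
        simpa [abs_mul] using abs_add_le (B - A) (B * k)
    _ ≤ 2 + 1 * k := by gcongr
    _ = k + 2 := by ring

lemma janowskiCoeff_le {A B : ℝ} (hB : |B| ≤ 1) (hAB : |B - A| ≤ 2) (n : ℕ) :
    janowskiCoeff A B n ≤ n + 2 := by
  induction n with
  | zero => simpa [janowskiCoeff] using abs_sub_add_mul_le hB hAB 0
  | succ n ih =>
    rw [janowskiCoeff, Finset.prod_range_succ, ← janowskiCoeff]
    calc janowskiCoeff A B n * (|(B - A) + B * (n + 1 : ℕ)| / ((n + 1 : ℕ) + 1))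
        ≤ (n + 2) * (((n + 1 : ℕ) + 2) / ((n + 1 : ℕ) + 1)) := by
          gcongr
          exact abs_sub_add_mul_le hB hAB (n + 1)
      _ = (n + 1 : ℕ) + 2 := by push_cast; field_simp; ring

lemma summable_mul_pow_add_two {c : ℕ → ℝ} {r : ℝ} (p : ℕ) (hc0 : ∀ n, 0 ≤ c n)
    (hc : ∀ n, c n ≤ ((n : ℝ) + 2) ^ p) (hr0 : 0 ≤ r) (hr1 : r < 1) :
    Summable fun n => c n * r ^ (n + 2) := by
  have hgeom : Summable fun n : ℕ => ((n : ℝ) + 2) ^ p * r ^ (n + 2) := by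
    have := (summable_pow_mul_geometric_of_norm_lt_one p (r := r)
      (by rwa [Real.norm_eq_abs, abs_of_nonneg hr0])).comp_injective (add_left_injective 2)
    simpa [Function.comp_def] using this
  exact hgeom.of_nonneg_of_le (fun n => by have := hc0 n; positivity)
    fun n => by gcongr; exact hc n

lemma tsum_mul_pow_le_tsum_mul_pow {b c : ℕ → ℝ} {u r : ℝ} (e : ℕ → ℕ) (hb0 : ∀ n, 0 ≤ b n)
    (hbc : ∀ n, b n ≤ c n) (hu0 : 0 ≤ u) (hur : u ≤ r)
    (hc : Summable fun n => c n * r ^ e n) :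
    ∑' n, b n * u ^ e n ≤ ∑' n, c n * r ^ e n := by
  have hle : ∀ n, b n * u ^ e n ≤ c n * r ^ e n := fun n =>
    mul_le_mul (hbc n) (pow_le_pow_left₀ hu0 hur _) (by positivity) ((hb0 n).trans (hbc n))
  exact (hc.of_nonneg_of_le (fun n => by have := hb0 n; positivity) hle).tsum_le_tsum hle hc

lemma bohrSum_le_bohrSum {Φ : ℝ → ℝ} {b c : ℕ → ℝ} {u r : ℝ} (hb0 : ∀ n, 0 ≤ b n)
    (hbc : ∀ n, b n ≤ c n) (hu0 : 0 ≤ u) (hur : u ≤ r) (hΦu : 0 ≤ Φ u) (hΦ : Φ u ≤ Φ r)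
    (hc₁ : Summable fun n => c n * r ^ (n + 2))
    (hc₂ : Summable fun n => c n ^ 2 * r ^ (2 * (n + 2))) :
    bohrSum Φ b u ≤ bohrSum Φ c r := by
  have h₁ := tsum_mul_pow_le_tsum_mul_pow (· + 2) hb0 hbc hu0 hur hc₁
  have h₂ := tsum_mul_pow_le_tsum_mul_pow (fun n => 2 * (n + 2)) (fun n => sq_nonneg (b n))
    (fun n => pow_le_pow_left₀ (hb0 n) (hbc n) 2) hu0 hur hc₂
  have h₂0 : 0 ≤ ∑' n, b n ^ 2 * u ^ (2 * (n + 2)) := tsum_nonneg fun n => by positivity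
  unfold bohrSum
  gcongr
  exact hΦu.trans hΦ

lemma summable_janowskiCoeff_mul_pow {A B r : ℝ} (hB : |B| ≤ 1) (hAB : |B - A| ≤ 2)
    (hr0 : 0 ≤ r) (hr1 : r < 1) :
    (Summable fun n => janowskiCoeff A B n * r ^ (n + 2)) ∧
      Summable fun n => janowskiCoeff A B n ^ 2 * r ^ (2 * (n + 2)) := by
  refine ⟨summable_mul_pow_add_two 1 (janowskiCoeff_nonneg A B)
    (fun n => by simpa using janowskiCoeff_le hB hAB n) hr0 hr1, ?_⟩
  simpa only [pow_mul] using summable_mul_pow_add_two 2 (fun n => sq_nonneg _)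
    (fun n => pow_le_pow_left₀ (janowskiCoeff_nonneg A B n) (janowskiCoeff_le hB hAB n) 2)
    (sq_nonneg r) (by nlinarith)

theorem stmt9_general (A B : ℝ) (hB1 : -1 ≤ B) (hBA : B < A) (hA1 : A ≤ 1)
    (f : ℂ → ℂ) (a : ℕ → ℂ)
    (ha : ∀ n, 2 ≤ n →
      ‖a n‖ ≤ ∏ k ∈ Finset.range (n - 1), |(B - A) + B * k| / (k + 1))
    (hd : (1 - B) ^ ((A - B) / B) ≤ infDist 0 (frontier (f '' ball 0 1)))
    (Φ : ℝ → ℝ)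
    (hΦm : MonotoneOn Φ (Icc 0 1)) (hΦ0 : ∀ x ∈ Icc (0:ℝ) 1, 0 ≤ Φ x)
    (ω : ℂ → ℂ)
    (hω : ∀ z ∈ ball (0:ℂ) 1, ‖ω z‖ ≤ ‖z‖)
    (R : ℝ) (hR : R ∈ Ioo (0:ℝ) 1)
    (hroot : R + (∑' n : ℕ,
          (∏ k ∈ Finset.range (n + 1), |(B - A) + B * k| / (k + 1)) * R ^ (n + 2))
        + Φ R * (∑' n : ℕ,
          (∏ k ∈ Finset.range (n + 1), |(B - A) + B * k| / (k + 1)) ^ 2 * R ^ (2 * (n + 2)))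
        = (1 - B) ^ ((A - B) / B)) :
    ∀ z : ℂ, ‖z‖ ≤ R →
      ‖ω z‖ + (∑' n : ℕ, ‖a (n + 2)‖ * ‖ω z‖ ^ (n + 2))
        + Φ ‖ω z‖ * (∑' n : ℕ, ‖a (n + 2)‖ ^ 2 * ‖ω z‖ ^ (2 * (n + 2)))
      ≤ infDist 0 (frontier (f '' ball 0 1)) := by
  intro z hz
  obtain ⟨hR0, hR1⟩ := hR
  have hB : |B| ≤ 1 := abs_le.2 ⟨hB1, by linarith⟩
  have hAB : |B - A| ≤ 2 := abs_le.2 ⟨by linarith, by linarith⟩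
  have hu0 : 0 ≤ ‖ω z‖ := norm_nonneg _
  have huR : ‖ω z‖ ≤ R := (hω z (mem_ball_zero_iff.2 (hz.trans_lt hR1))).trans hz
  obtain ⟨hc₁, hc₂⟩ := summable_janowskiCoeff_mul_pow hB hAB hR0.le hR1
  have hsum : bohrSum Φ (fun n => ‖a (n + 2)‖) ‖ω z‖ ≤ bohrSum Φ (janowskiCoeff A B) R :=
    bohrSum_le_bohrSum (fun n => norm_nonneg _) (fun n => ha (n + 2) (by omega)) hu0 huR
      (hΦ0 _ ⟨hu0, huR.trans hR1.le⟩)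
      (hΦm ⟨hu0, huR.trans hR1.le⟩ ⟨hR0.le, hR1.le⟩ huR) hc₁ hc₂
  exact (hsum.trans_eq hroot).trans hd

theorem stmt9 (A B : ℝ) (hB1 : -1 ≤ B) (hBA : B < A) (hA1 : A ≤ 1) (hB0 : B ≠ 0)
    (f : ℂ → ℂ) (a : ℕ → ℂ)
    (hf : AnalyticOn ℂ f (ball 0 1))
    (hrep : ∀ z ∈ ball (0:ℂ) 1, f z = z + ∑' n : ℕ, a (n + 2) * z ^ (n + 2))
    (ha : ∀ n, 2 ≤ n →
      ‖a n‖ ≤ ∏ k ∈ Finset.range (n - 1), |(B - A) + B * k| / (k + 1))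
    (hd : (1 - B) ^ ((A - B) / B) ≤ infDist 0 (frontier (f '' ball 0 1)))
    (Φ : ℝ → ℝ) (hΦc : ContinuousOn Φ (Icc 0 1))
    (hΦm : MonotoneOn Φ (Icc 0 1)) (hΦ0 : ∀ x ∈ Icc (0:ℝ) 1, 0 ≤ Φ x)
    (ω : ℂ → ℂ) (hωmap : ∀ z ∈ ball (0:ℂ) 1, ω z ∈ ball (0:ℂ) 1)
    (hω : ∀ z ∈ ball (0:ℂ) 1, ‖ω z‖ ≤ ‖z‖)
    (R : ℝ) (hR : R ∈ Ioo (0:ℝ) 1)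
    (hroot : R + (∑' n : ℕ,
          (∏ k ∈ Finset.range (n + 1), |(B - A) + B * k| / (k + 1)) * R ^ (n + 2))
        + Φ R * (∑' n : ℕ,
          (∏ k ∈ Finset.range (n + 1), |(B - A) + B * k| / (k + 1)) ^ 2 * R ^ (2 * (n + 2)))
        = (1 - B) ^ ((A - B) / B)) :
    ∀ z : ℂ, ‖z‖ ≤ R →
      ‖ω z‖ + (∑' n : ℕ, ‖a (n + 2)‖ * ‖ω z‖ ^ (n + 2))
        + Φ ‖ω z‖ * (∑' n : ℕ, ‖a (n + 2)‖ ^ 2 * ‖ω z‖ ^ (2 * (n + 2)))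
      ≤ infDist 0 (frontier (f '' ball 0 1)) :=
  stmt9_general A B hB1 hBA hA1 f a ha hd Φ hΦm hΦ0 ω hω R hR hroot
end

section
/- Let A ∈ (0,1], B = 0, and suppose f(z) = z + ∑_{n=2}^∞ aₙ zⁿ satisfies |aₙ| ≤ A^{n−1}/(n−1)! for n ≥ 2 and d(0, ∂f(𝔻)) ≥ e^{−A}. Let Φ : [0,1] → [0,∞) be continuous increasing and ω : 𝔻 → 𝔻 with |ω(z)| ≤ |z|. Then |ω(z)| + ∑_{n=2}^∞ |aₙ||ω(z)|ⁿ + Φ(|ω(z)|)∑_{n=2}^∞ |aₙ|²|ω(z)|^{2n} ≤ d(0, ∂f(𝔻)) for all |z| = r with r e^{Ar} + Φ(r) r² (J₀(2Ar) − 1) ≤ e^{−A}, where J₀(x) = ∑_{n=0}^∞ x^{2n}/(4^n(n!)²). -/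
open Set Metric

/-- Bessel function of the first kind of order zero. -/
noncomputable def J0 (x : ℝ) : ℝ := ∑' n : ℕ, x ^ (2 * n) / (4 ^ n * (Nat.factorial n) ^ 2)

lemma exp_tsum' (x : ℝ) : Real.exp x = ∑' n : ℕ, x ^ n / n.factorial := by
  rw [Real.exp_eq_exp_ℝ, NormedSpace.exp_eq_tsum_div]

lemma fact_one_le' (n : ℕ) : (1:ℝ) ≤ n.factorial := by exact_mod_cast n.factorial_pos

lemma sumJ' (x : ℝ) : Summable (fun n : ℕ => x ^ (2*n) / (n.factorial : ℝ)^2) := by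
  refine Summable.of_nonneg_of_le (fun n => ?_) ?_ (Real.summable_pow_div_factorial (x^2))
  · rw [pow_mul]; positivity
  intro n
  rw [pow_mul]
  apply div_le_div_of_nonneg_left (by positivity) (by positivity)
  calc ((n.factorial:ℝ)) = n.factorial * 1 := by ring
    _ ≤ (n.factorial:ℝ) * n.factorial := by have := fact_one_le' n; gcongr
    _ = (n.factorial:ℝ)^2 := (sq _).symm

lemma J0_eq' (A r : ℝ) : J0 (2*A*r) = ∑' n : ℕ, (A*r) ^ (2*n) / (n.factorial : ℝ)^2 := by
  unfold J0
  refine tsum_congr fun n => ?_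
  have h : (2*A*r)^(2*n) = 4^n * (A*r)^(2*n) := by
    rw [show (2*A*r) = 2*(A*r) by ring, mul_pow, pow_mul]; norm_num
  rw [h, mul_div_mul_left _ _ (pow_ne_zero n (by norm_num : (4:ℝ) ≠ 0))]

lemma sumS1 (A r : ℝ) : Summable (fun n : ℕ => A^(n+1)/((n+1).factorial:ℝ) * r^(n+2)) := by
  have h : Summable (fun n : ℕ => r * ((A*r)^(n+1)/((n+1).factorial:ℝ))) :=
    (((summable_nat_add_iff 1).2 (Real.summable_pow_div_factorial (A*r)))).mul_left r
  refine h.congr fun n => ?_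
  rw [mul_pow]; ring

lemma S1_eq (A r : ℝ) :
    r + ∑' n : ℕ, A^(n+1)/((n+1).factorial:ℝ) * r^(n+2) = r * Real.exp (A*r) := by
  have hs := Real.summable_pow_div_factorial (A*r)
  rw [exp_tsum' (A*r), ← tsum_mul_left, Summable.tsum_eq_zero_add (hs.mul_left r)]
  simp only [pow_zero, Nat.factorial_zero]
  rw [show r * (1 / ((1:ℕ):ℝ)) = r by norm_num]
  congr 1
  refine tsum_congr fun n => ?_
  rw [mul_pow]; ring

lemma sumS2 (A r : ℝ) : Summable (fun n : ℕ => (A^(n+1)/((n+1).factorial:ℝ))^2 * r^(2*(n+2))) := by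
  have h : Summable (fun n : ℕ => r^2 * ((A*r)^(2*(n+1))/((n+1).factorial:ℝ)^2)) :=
    (((summable_nat_add_iff 1).2 (sumJ' (A*r)))).mul_left _
  refine h.congr fun n => ?_
  rw [pow_mul' (A*r), mul_pow, pow_mul' r 2 (n+2), div_pow]; ring

lemma S2_eq (A r : ℝ) :
    r^2 * (J0 (2*A*r) - 1) = ∑' n : ℕ, (A^(n+1)/((n+1).factorial:ℝ))^2 * r^(2*(n+2)) := by
  rw [J0_eq', Summable.tsum_eq_zero_add (sumJ' (A*r))]
  simp only [mul_zero, pow_zero, Nat.factorial_zero]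
  rw [show ((1:ℕ):ℝ)^2 = 1 by norm_num, div_one, add_sub_cancel_left, ← tsum_mul_left]
  refine tsum_congr fun n => ?_
  rw [pow_mul' (A*r), mul_pow, pow_mul' r 2 (n+2), div_pow]; ring

theorem stmt10 (A : ℝ) (hA0 : 0 < A) (hA1 : A ≤ 1)
    (f : ℂ → ℂ) (a : ℕ → ℂ)
    (hf : AnalyticOn ℂ f (ball 0 1))
    (hrep : ∀ z ∈ ball (0:ℂ) 1, f z = z + ∑' n : ℕ, a (n + 2) * z ^ (n + 2))
    (ha : ∀ n, 2 ≤ n → ‖a n‖ ≤ A ^ (n - 1) / (Nat.factorial (n - 1)))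
    (hd : Real.exp (-A) ≤ infDist 0 (frontier (f '' ball 0 1)))
    (Φ : ℝ → ℝ) (hΦc : ContinuousOn Φ (Icc 0 1))
    (hΦm : MonotoneOn Φ (Icc 0 1)) (hΦ0 : ∀ x ∈ Icc (0:ℝ) 1, 0 ≤ Φ x)
    (ω : ℂ → ℂ) (hωmap : ∀ z ∈ ball (0:ℂ) 1, ω z ∈ ball (0:ℂ) 1)
    (hω : ∀ z ∈ ball (0:ℂ) 1, ‖ω z‖ ≤ ‖z‖) :
    ∀ z : ℂ, ‖z‖ < 1 →
      ‖z‖ * Real.exp (A * ‖z‖) + Φ ‖z‖ * ‖z‖ ^ 2 * (J0 (2 * A * ‖z‖) - 1)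
        ≤ Real.exp (-A) →
      ‖ω z‖ + (∑' n : ℕ, ‖a (n + 2)‖ * ‖ω z‖ ^ (n + 2))
        + Φ ‖ω z‖ * (∑' n : ℕ, ‖a (n + 2)‖ ^ 2 * ‖ω z‖ ^ (2 * (n + 2)))
      ≤ infDist 0 (frontier (f '' ball 0 1)) := by
  intro z hz1 hineq
  have hzball : z ∈ ball (0:ℂ) 1 := by simpa [mem_ball, dist_zero_right] using hz1
  set s := ‖z‖ with hs
  set r := ‖ω z‖ with hr
  have hrs : r ≤ s := hω z hzball
  have hr0 : (0:ℝ) ≤ r := norm_nonneg _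
  have hs0 : (0:ℝ) ≤ s := norm_nonneg _
  have hA : (0:ℝ) ≤ A := hA0.le
  have han : ∀ n : ℕ, ‖a (n+2)‖ ≤ A^(n+1)/((n+1).factorial:ℝ) := by
    intro n
    have := ha (n+2) (by omega)
    simpa using this
  -- summability
  have sumA1 : Summable (fun n : ℕ => ‖a (n+2)‖ * r^(n+2)) := by
    refine Summable.of_nonneg_of_le (fun n => by positivity) (fun n => ?_) (sumS1 A r)
    exact mul_le_mul_of_nonneg_right (han n) (pow_nonneg hr0 _)
  have sumA2 : Summable (fun n : ℕ => ‖a (n+2)‖^2 * r^(2*(n+2))) := by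
    refine Summable.of_nonneg_of_le (fun n => by positivity) (fun n => ?_) (sumS2 A r)
    exact mul_le_mul_of_nonneg_right (pow_le_pow_left₀ (norm_nonneg _) (han n) 2)
      (pow_nonneg hr0 _)
  -- first sum bound
  have h1 : r + (∑' n : ℕ, ‖a (n+2)‖ * r^(n+2)) ≤ s * Real.exp (A * s) := by
    have e1 : (∑' n : ℕ, ‖a (n+2)‖ * r^(n+2))
        ≤ ∑' n : ℕ, A^(n+1)/((n+1).factorial:ℝ) * r^(n+2) := by
      refine Summable.tsum_le_tsum (fun n => ?_) sumA1 (sumS1 A r)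
      exact mul_le_mul_of_nonneg_right (han n) (pow_nonneg hr0 _)
    have e2 : (∑' n : ℕ, A^(n+1)/((n+1).factorial:ℝ) * r^(n+2))
        ≤ ∑' n : ℕ, A^(n+1)/((n+1).factorial:ℝ) * s^(n+2) := by
      refine Summable.tsum_le_tsum (fun n => ?_) (sumS1 A r) (sumS1 A s)
      have : r^(n+2) ≤ s^(n+2) := pow_le_pow_left₀ hr0 hrs _
      have hc : (0:ℝ) ≤ A^(n+1)/((n+1).factorial:ℝ) := by positivity
      exact mul_le_mul_of_nonneg_left this hc
    calc r + (∑' n : ℕ, ‖a (n+2)‖ * r^(n+2))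
        ≤ s + ∑' n : ℕ, A^(n+1)/((n+1).factorial:ℝ) * s^(n+2) := by
          exact add_le_add hrs (e1.trans e2)
      _ = s * Real.exp (A * s) := S1_eq A s
  -- second sum bound
  have h2 : Φ r * (∑' n : ℕ, ‖a (n+2)‖^2 * r^(2*(n+2)))
      ≤ Φ s * s^2 * (J0 (2*A*s) - 1) := by
    have e1 : (∑' n : ℕ, ‖a (n+2)‖^2 * r^(2*(n+2)))
        ≤ ∑' n : ℕ, (A^(n+1)/((n+1).factorial:ℝ))^2 * r^(2*(n+2)) := by
      refine Summable.tsum_le_tsum (fun n => ?_) sumA2 (sumS2 A r)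
      exact mul_le_mul_of_nonneg_right (pow_le_pow_left₀ (norm_nonneg _) (han n) 2)
        (pow_nonneg hr0 _)
    have e2 : (∑' n : ℕ, (A^(n+1)/((n+1).factorial:ℝ))^2 * r^(2*(n+2)))
        ≤ ∑' n : ℕ, (A^(n+1)/((n+1).factorial:ℝ))^2 * s^(2*(n+2)) := by
      refine Summable.tsum_le_tsum (fun n => ?_) (sumS2 A r) (sumS2 A s)
      have : r^(2*(n+2)) ≤ s^(2*(n+2)) := pow_le_pow_left₀ hr0 hrs _
      have hc : (0:ℝ) ≤ (A^(n+1)/((n+1).factorial:ℝ))^2 := by positivity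
      exact mul_le_mul_of_nonneg_left this hc
    have hX0 : (0:ℝ) ≤ ∑' n : ℕ, ‖a (n+2)‖^2 * r^(2*(n+2)) :=
      tsum_nonneg fun n => by positivity
    have hrmem : r ∈ Icc (0:ℝ) 1 := ⟨hr0, hrs.trans hz1.le⟩
    have hsmem : s ∈ Icc (0:ℝ) 1 := ⟨hs0, hz1.le⟩
    have hΦrs : Φ r ≤ Φ s := hΦm hrmem hsmem hrs
    have hΦs0 : 0 ≤ Φ s := hΦ0 s hsmem
    calc Φ r * (∑' n : ℕ, ‖a (n+2)‖^2 * r^(2*(n+2)))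
        ≤ Φ s * ∑' n : ℕ, (A^(n+1)/((n+1).factorial:ℝ))^2 * s^(2*(n+2)) := by
          exact mul_le_mul hΦrs (e1.trans e2) hX0 hΦs0
      _ = Φ s * (s^2 * (J0 (2*A*s) - 1)) := by rw [S2_eq]
      _ = Φ s * s^2 * (J0 (2*A*s) - 1) := by ring
  calc r + (∑' n : ℕ, ‖a (n+2)‖ * r^(n+2))
        + Φ r * (∑' n : ℕ, ‖a (n+2)‖^2 * r^(2*(n+2)))
      ≤ s * Real.exp (A * s) + Φ s * s^2 * (J0 (2*A*s) - 1) := add_le_add h1 h2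
    _ ≤ Real.exp (-A) := hineq
    _ ≤ infDist 0 (frontier (f '' ball 0 1)) := hd
end
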